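/- Let $a_0, a_1, a_2$ be pairwise coprime positive integers. Then $\sigma_0(a_1,a_2;a_0) + \sigma_0(a_0,a_2;a_1) + \sigma_0(a_0,a_1;a_2) = 1 - \frac{1}{12}\left(\frac{3}{a_0}+\frac{3}{a_1}+\frac{3}{a_2}+\frac{a_0}{a_1a_2}+\frac{a_1}{a_0a_2}+\frac{a_2}{a_0a_1}\right)$ (Zagier reciprocity in dimension 2, in Fourier-Dedekind form). -/

import Mathlib

/-!
The identity is the residue theorem for `1 / (z (1 - z^a₀) (1 - z^a₁) (1 - z^a₂))`, carried out
with polynomials. Let `G = [a₀][a₁][a₂]` with `[n] = 1 + X + ⋯ + X^(n-1)`; by coprimality its roots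
are the nontrivial `aᵢ`-th roots of unity, all simple. The Taylor expansion of `G` at `1` to order
two yields `P` of degree `≤ 2` with `G(1)³ - P G = (X - 1)³ K`, so `deg K < deg G`. Lagrange
interpolation of `K` at the roots of `G`, evaluated at `0`, gives `K(0) = -∑ K(z) / (z G'(z))`.
At a root `z` of `[a₀]` we have `K(z) = G(1)³ / (z - 1)³` and
`z (z - 1)³ G'(z) = a₀ (1 - z^a₁) (1 - z^a₂)`, so the right side is `-G(1)³` times the sum of the
three Fourier–Dedekind sums (the residues at the roots of unity), while `K(0) = P(0) - G(1)³`
(the residues at `0` and `1`).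
-/

open Finset Polynomial

/-- The Fourier-Dedekind sum `σ₀(a,b;c)`. -/
noncomputable def fourierDedekind2zero (a b c : ℕ) : ℂ :=
  (1 / (c : ℂ)) * ∑ z ∈ (nthRootsFinset c (1 : ℂ)).erase 1,
    1 / ((1 - z ^ a) * (1 - z ^ b))

section RootsOfUnity

variable {R : Type*} [CommRing R] [IsDomain R] [DecidableEq R]

variable (R) in
noncomputable def nontrivialNthRoots (n : ℕ) : Finset R := (nthRootsFinset n (1 : R)).erase 1

lemma pow_eq_one_of_mem_nontrivialNthRoots {n : ℕ} {z : R} (hz : z ∈ nontrivialNthRoots R n) :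
    z ^ n = 1 := by
  rcases Nat.eq_zero_or_pos n with rfl | hn
  · exact pow_zero z
  · exact (mem_nthRootsFinset hn 1).1 (mem_of_mem_erase hz)

lemma ne_one_of_mem_nontrivialNthRoots {n : ℕ} {z : R} (hz : z ∈ nontrivialNthRoots R n) :
    z ≠ 1 :=
  ne_of_mem_erase hz

lemma disjoint_nontrivialNthRoots {m n : ℕ} (h : m.Coprime n) :
    Disjoint (nontrivialNthRoots R m) (nontrivialNthRoots R n) :=
  disjoint_left.2 fun _ hm hn => ne_one_of_mem_nontrivialNthRoots hm <|
    (pow_eq_one_iff_of_coprime h).1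
      ⟨pow_eq_one_of_mem_nontrivialNthRoots hm, pow_eq_one_of_mem_nontrivialNthRoots hn⟩

lemma geom_sum_X_eq_prod_nontrivialNthRoots {n : ℕ} (hn : 0 < n) {ζ : R}
    (hζ : IsPrimitiveRoot ζ n) :
    ∑ i ∈ range n, (X : R[X]) ^ i = ∏ z ∈ nontrivialNthRoots R n, (X - C z) := by
  apply mul_left_cancel₀ (X_sub_C_ne_zero (1 : R))
  rw [nontrivialNthRoots, mul_prod_erase _ (fun z => X - C z) (one_mem_nthRootsFinset hn),
    ← X_pow_sub_one_eq_prod hn hζ, C_1, mul_comm, geom_sum_mul]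

end RootsOfUnity

section GeomSum

variable {R : Type*} [CommRing R] [IsDomain R] {z : R} {n : ℕ}

lemma eval_geom_sum_X_of_pow_eq_one (hz : z ^ n = 1) (hz1 : z ≠ 1) :
    eval z (∑ i ∈ range n, X ^ i) = 0 := by
  have := geom_sum_mul z n
  rw [hz, sub_self, mul_eq_zero] at this
  simpa [eval_finsetSum, sub_ne_zero.2 hz1] using this

lemma mul_sub_one_mul_eval_derivative_geom_sum_X (hz : z ^ n = 1) (hz1 : z ≠ 1) :
    z * (z - 1) * eval z (derivative (∑ i ∈ range n, X ^ i)) = n := by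
  have h := congrArg (fun p => eval z (derivative p)) (geom_sum_mul (X : R[X]) n)
  simp only [derivative_mul, derivative_sub, derivative_X, derivative_one, derivative_X_pow,
    eval_add, eval_mul, eval_sub, eval_X, eval_one, eval_C, eval_pow, sub_zero, mul_one,
    eval_geom_sum_X_of_pow_eq_one hz hz1, add_zero] at h
  rcases n with _ | n
  · simp
  · rw [Nat.add_sub_cancel] at h
    push_cast at h ⊢
    linear_combination z * h + (n + 1 : R) * hz

lemma mul_sub_one_pow_three_mul_eval_derivative_geom_sum_X_mul (hz : z ^ n = 1) (hz1 : z ≠ 1)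
    (b c : ℕ) :
    z * (z - 1) ^ 3 * eval z (derivative
      ((∑ i ∈ range n, X ^ i) * (∑ i ∈ range b, X ^ i) * ∑ i ∈ range c, X ^ i)) =
      n * (1 - z ^ b) * (1 - z ^ c) := by
  have hb := geom_sum_mul z b
  have hc := geom_sum_mul z c
  have hn := mul_sub_one_mul_eval_derivative_geom_sum_X hz hz1
  simp only [derivative_mul, eval_add, eval_mul, eval_geom_sum_X_of_pow_eq_one hz hz1]
  simp only [eval_finsetSum, eval_pow, eval_X]
  linear_combination (z - 1) ^ 2 * (∑ i ∈ range b, z ^ i) * (∑ i ∈ range c, z ^ i) * hn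
    + n * (z - 1) * (∑ i ∈ range c, z ^ i) * hb + n * (z ^ b - 1) * hc

end GeomSum

section DivisionByPower

variable {R : Type*} [CommRing R] {K P G : R[X]} {x c : R} {n : ℕ}

lemma eval_eq_of_X_sub_C_pow_mul_eq (h : (X - C x) ^ n * K = C c - P * G) {z : R}
    (hz : eval z G = 0) : (z - x) ^ n * eval z K = c := by
  simpa [hz] using congrArg (eval z) h

lemma degree_lt_of_X_sub_C_pow_mul_eq [IsDomain R] (hP : P.natDegree < n)
    (h : (X - C x) ^ n * K = C c - P * G) : K.degree < G.natDegree := by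
  rcases eq_or_ne K 0 with rfl | hK
  · rw [degree_zero]
    exact WithBot.bot_lt_coe _
  rw [degree_eq_natDegree hK, Nat.cast_lt]
  have hPG : (P * G).natDegree ≤ P.natDegree + G.natDegree := natDegree_mul_le
  have hsub := natDegree_sub_le (C c) (P * G)
  rw [← h, natDegree_mul (pow_ne_zero _ (X_sub_C_ne_zero x)) hK, natDegree_pow, natDegree_X_sub_C,
    natDegree_C] at hsub
  omega

end DivisionByPower

section Interpolation

variable {F : Type*} [Field F]

open Lagrange in
lemma eval_eq_eval_nodal_mul_sum {s : Finset F} {K : F[X]} (hK : K.degree < #s) {x : F}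
    (hx : x ∉ s) :
    eval x K = eval x (nodal s id) *
      ∑ z ∈ s, (eval z (derivative (nodal s id)))⁻¹ * (x - z)⁻¹ * eval z K := by
  classical
  conv_lhs => rw [eq_interpolate (Set.injOn_id _) hK]
  rw [eval_interpolate_not_at_node (v := id) _ fun z hz => (ne_of_mem_of_not_mem hz hx).symm]
  refine congrArg _ (sum_congr rfl fun z hz => ?_)
  rw [nodalWeight_eq_eval_derivative_nodal hz, id]

end Interpolation

section Jets

variable {R : Type*} [CommRing R] {t : R}

lemma one_add_pow_of_pow_three_eq_zero (ht : t ^ 3 = 0) (n : ℕ) :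
    (1 + t) ^ n = 1 + n * t + n.choose 2 * t ^ 2 := by
  induction n with
  | zero => simp
  | succ n ih =>
    rw [pow_succ, ih, Nat.choose_succ_succ', Nat.choose_one_right]
    push_cast
    linear_combination (n.choose 2 : R) * ht

lemma geom_sum_one_add_of_pow_three_eq_zero (ht : t ^ 3 = 0) (n : ℕ) :
    ∑ i ∈ range n, (1 + t) ^ i = n + n.choose 2 * t + n.choose 3 * t ^ 2 := by
  induction n with
  | zero => simp
  | succ n ih =>
    rw [sum_range_succ, ih, one_add_pow_of_pow_three_eq_zero ht, Nat.choose_succ_succ' n 1,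
      Nat.choose_succ_succ' n 2, Nat.choose_one_right]
    push_cast
    ring

lemma jet_mul_of_pow_three_eq_zero (ht : t ^ 3 = 0) (p₀ p₁ p₂ q₀ q₁ q₂ : R) :
    (p₀ + p₁ * t + p₂ * t ^ 2) * (q₀ + q₁ * t + q₂ * t ^ 2) =
      p₀ * q₀ + (p₀ * q₁ + p₁ * q₀) * t + (p₀ * q₂ + p₁ * q₁ + p₂ * q₀) * t ^ 2 := by
  linear_combination (p₁ * q₂ + p₂ * q₁ + p₂ * q₂ * t) * ht

lemma jet_mul_inverse_of_pow_three_eq_zero (ht : t ^ 3 = 0) (g₀ g₁ g₂ : R) :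
    (g₀ + g₁ * t + g₂ * t ^ 2) * (g₀ ^ 2 - g₀ * g₁ * t + (g₁ ^ 2 - g₀ * g₂) * t ^ 2) = g₀ ^ 3 := by
  linear_combination (g₁ ^ 3 - 2 * g₀ * g₁ * g₂ + (g₂ * g₁ ^ 2 - g₀ * g₂ ^ 2) * t) * ht

end Jets

section TaylorAtOne

variable {R : Type*} [CommRing R]

lemma root_sub_one_pow_three_eq_zero :
    (AdjoinRoot.root ((X - 1 : R[X]) ^ 3) - 1) ^ 3 = 0 := by
  rw [← AdjoinRoot.mk_X, ← map_one (AdjoinRoot.mk _), ← map_sub, ← map_pow, AdjoinRoot.mk_self]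

def geomTripleCoeff₁ (a b c : ℕ) : ℕ :=
  a.choose 2 * b * c + a * b.choose 2 * c + a * b * c.choose 2

def geomTripleCoeff₂ (a b c : ℕ) : ℕ :=
  a.choose 3 * b * c + a * b.choose 3 * c + a * b * c.choose 3 +
    a.choose 2 * b.choose 2 * c + a.choose 2 * b * c.choose 2 + a * b.choose 2 * c.choose 2

lemma X_sub_one_pow_three_dvd_geom_sum_mul_geom_sum_mul_geom_sum (a b c : ℕ) :
    (X - 1 : R[X]) ^ 3 ∣
      (∑ i ∈ range a, X ^ i) * (∑ i ∈ range b, X ^ i) * (∑ i ∈ range c, X ^ i) -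
        (C ((a * b * c : ℕ) : R) + C (geomTripleCoeff₁ a b c : R) * (X - 1) +
          C (geomTripleCoeff₂ a b c : R) * (X - 1) ^ 2) := by
  have ht := root_sub_one_pow_three_eq_zero (R := R)
  rw [← AdjoinRoot.mk_eq_mk]
  simp only [map_mul, map_add, map_sub, map_sum, map_pow, map_one, AdjoinRoot.mk_X,
    map_natCast]
  rw [← add_sub_cancel (1 : AdjoinRoot ((X - 1 : R[X]) ^ 3)) (AdjoinRoot.root _)]
  simp only [geom_sum_one_add_of_pow_three_eq_zero ht, jet_mul_of_pow_three_eq_zero ht,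
    geomTripleCoeff₁, geomTripleCoeff₂]
  push_cast
  ring

noncomputable def jetCubeInverse (g₀ g₁ g₂ : R) : R[X] :=
  C (g₀ ^ 2) - C (g₀ * g₁) * (X - 1) + C (g₁ ^ 2 - g₀ * g₂) * (X - 1) ^ 2

lemma natDegree_jetCubeInverse_le (g₀ g₁ g₂ : R) : (jetCubeInverse g₀ g₁ g₂).natDegree ≤ 2 := by
  unfold jetCubeInverse
  compute_degree

lemma X_sub_one_pow_three_dvd_C_sub_jetCubeInverse_mul {G : R[X]} {g₀ g₁ g₂ : R}
    (hG : (X - 1 : R[X]) ^ 3 ∣ G - (C g₀ + C g₁ * (X - 1) + C g₂ * (X - 1) ^ 2)) :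
    (X - 1 : R[X]) ^ 3 ∣ C (g₀ ^ 3) - jetCubeInverse g₀ g₁ g₂ * G := by
  rw [← AdjoinRoot.mk_eq_mk] at hG ⊢
  rw [map_mul, hG, jetCubeInverse]
  simp only [map_mul, map_add, map_sub, map_pow, map_one, AdjoinRoot.mk_X, AdjoinRoot.mk_C]
  linear_combination -jet_mul_inverse_of_pow_three_eq_zero root_sub_one_pow_three_eq_zero
    (g₀ : AdjoinRoot ((X - 1 : R[X]) ^ 3)) g₁ g₂

end TaylorAtOne

lemma twelve_mul_eval_zero_jetCubeInverse (a b c : ℕ) :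
    12 * eval 0 (jetCubeInverse ((a * b * c : ℕ) : ℂ) (geomTripleCoeff₁ a b c)
      (geomTripleCoeff₂ a b c)) =
      (a * b * c) ^ 2 * (3 * a * b + 3 * b * c + 3 * c * a + a ^ 2 + b ^ 2 + c ^ 2) := by
  have choose_three (n : ℕ) : (n.choose 3 : ℂ) = n * (n - 1) * (n - 2) / 6 := by
    simp [Nat.cast_choose_eq_descPochhammer_div, descPochhammer_succ_right, Nat.factorial]
  simp only [jetCubeInverse, geomTripleCoeff₁, geomTripleCoeff₂, eval_sub, eval_add, eval_mul,
    eval_pow, eval_C, eval_X, eval_one]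
  push_cast
  simp only [Nat.cast_choose_two, choose_three]
  ring

local notation "E" n:max => nontrivialNthRoots ℂ n

section Residues

variable {a b c : ℕ}

lemma geom_sum_X_mul_eq_nodal (ha : 0 < a) (hb : 0 < b) (hc : 0 < c) (hab : a.Coprime b)
    (hac : a.Coprime c) (hbc : b.Coprime c) :
    (∑ i ∈ range a, X ^ i) * (∑ i ∈ range b, X ^ i) * (∑ i ∈ range c, X ^ i) =
      Lagrange.nodal (E a ∪ E b ∪ E c) id := by
  rw [Lagrange.nodal, prod_union (disjoint_union_left.2
      ⟨disjoint_nontrivialNthRoots hac, disjoint_nontrivialNthRoots hbc⟩),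
    prod_union (disjoint_nontrivialNthRoots hab),
    geom_sum_X_eq_prod_nontrivialNthRoots ha (Complex.isPrimitiveRoot_exp a ha.ne'),
    geom_sum_X_eq_prod_nontrivialNthRoots hb (Complex.isPrimitiveRoot_exp b hb.ne'),
    geom_sum_X_eq_prod_nontrivialNthRoots hc (Complex.isPrimitiveRoot_exp c hc.ne')]
  rfl

lemma sum_nontrivialNthRoots_inv_derivative_mul {G K : ℂ[X]} {w : ℂ}
    (hG : G = (∑ i ∈ range a, X ^ i) * (∑ i ∈ range b, X ^ i) * (∑ i ∈ range c, X ^ i))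
    (hK : ∀ z ∈ E a, (z - 1) ^ 3 * eval z K = w) :
    ∑ z ∈ E a, (eval z (derivative G))⁻¹ * (0 - z)⁻¹ * eval z K =
      -w * fourierDedekind2zero b c a := by
  rw [fourierDedekind2zero, mul_sum, mul_sum]
  refine sum_congr rfl fun z hz => ?_
  have hz1 : z - 1 ≠ 0 := sub_ne_zero.2 (ne_one_of_mem_nontrivialNthRoots hz)
  have hD := hG ▸ mul_sub_one_pow_three_mul_eval_derivative_geom_sum_X_mul
    (pow_eq_one_of_mem_nontrivialNthRoots hz) (ne_one_of_mem_nontrivialNthRoots hz) b c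
  rw [eq_div_of_mul_eq (pow_ne_zero 3 hz1) ((mul_comm _ _).trans (hK z hz)), one_div_mul_one_div,
    ← mul_assoc, ← hD]
  simp only [div_eq_mul_inv, mul_inv, zero_sub, inv_neg]
  ring

lemma sum_union_nontrivialNthRoots_inv_derivative_mul (hab : a.Coprime b) (hac : a.Coprime c)
    (hbc : b.Coprime c) {K : ℂ[X]} {w : ℂ}
    (hK : ∀ z ∈ E a ∪ E b ∪ E c, (z - 1) ^ 3 * eval z K = w) :
    ∑ z ∈ E a ∪ E b ∪ E c, (eval z (derivative
      ((∑ i ∈ range a, X ^ i) * (∑ i ∈ range b, X ^ i) * (∑ i ∈ range c, X ^ i))))⁻¹ *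
        (0 - z)⁻¹ * eval z K =
      -w * (fourierDedekind2zero b c a + fourierDedekind2zero a c b +
        fourierDedekind2zero a b c) := by
  rw [sum_union (disjoint_union_left.2
      ⟨disjoint_nontrivialNthRoots hac, disjoint_nontrivialNthRoots hbc⟩),
    sum_union (disjoint_nontrivialNthRoots hab),
    sum_nontrivialNthRoots_inv_derivative_mul rfl fun z hz => hK z (by simp [hz]),
    sum_nontrivialNthRoots_inv_derivative_mul (b := a) (c := c) (by ring)
      fun z hz => hK z (by simp [hz]),
    sum_nontrivialNthRoots_inv_derivative_mul (b := a) (c := b) (by ring)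
      fun z hz => hK z (by simp [hz])]
  ring

lemma cube_mul_sum_fourierDedekind2zero (ha : 0 < a) (hb : 0 < b) (hc : 0 < c)
    (hab : a.Coprime b) (hac : a.Coprime c) (hbc : b.Coprime c) :
    ((a * b * c : ℕ) : ℂ) ^ 3 *
      (fourierDedekind2zero b c a + fourierDedekind2zero a c b + fourierDedekind2zero a b c) =
      ((a * b * c : ℕ) : ℂ) ^ 3 -
        eval 0 (jetCubeInverse ((a * b * c : ℕ) : ℂ) (geomTripleCoeff₁ a b c)
          (geomTripleCoeff₂ a b c)) := by
  obtain ⟨K, hK⟩ := X_sub_one_pow_three_dvd_C_sub_jetCubeInverse_mul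
    (X_sub_one_pow_three_dvd_geom_sum_mul_geom_sum_mul_geom_sum (R := ℂ) a b c)
  have hGS := geom_sum_X_mul_eq_nodal ha hb hc hab hac hbc
  have hG0 : eval 0 (Lagrange.nodal (E a ∪ E b ∪ E c) id) = 1 := by
    rw [← hGS]
    simp [eval_finsetSum, ha.ne', hb.ne', hc.ne']
  rw [hGS] at hK
  have hdeg := degree_lt_of_X_sub_C_pow_mul_eq (x := (1 : ℂ))
    ((natDegree_jetCubeInverse_le _ _ _).trans_lt (by norm_num)) hK.symm
  rw [Lagrange.natDegree_nodal] at hdeg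
  have h0 : (0 : ℂ) ∉ E a ∪ E b ∪ E c := fun h =>
    one_ne_zero (hG0.symm.trans (Lagrange.eval_nodal_at_node (v := id) h))
  have hK0 := eval_eq_eval_nodal_mul_sum hdeg h0
  rw [hG0, one_mul, ← hGS, sum_union_nontrivialNthRoots_inv_derivative_mul hab hac hbc
    fun z hz => eval_eq_of_X_sub_C_pow_mul_eq hK.symm (Lagrange.eval_nodal_at_node (v := id) hz)]
    at hK0
  have h := congrArg (eval 0) hK
  simp only [eval_sub, eval_mul, eval_C, hG0, eval_pow, eval_X, eval_one] at h
  linear_combination hK0 - h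

end Residues

theorem zagier_reciprocity_fourier_form (a₀ a₁ a₂ : ℕ) (h₀ : 0 < a₀)
    (h₁ : 0 < a₁) (h₂ : 0 < a₂) (h₀₁ : Nat.Coprime a₀ a₁)
    (h₀₂ : Nat.Coprime a₀ a₂) (h₁₂ : Nat.Coprime a₁ a₂) :
    fourierDedekind2zero a₁ a₂ a₀ + fourierDedekind2zero a₀ a₂ a₁ +
        fourierDedekind2zero a₀ a₁ a₂ =
      1 - (1 / 12) * (3 / a₀ + 3 / a₁ + 3 / a₂ + (a₀ : ℂ) / (a₁ * a₂) +
        (a₁ : ℂ) / (a₀ * a₂) + (a₂ : ℂ) / (a₀ * a₁)) := by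
  have h := cube_mul_sum_fourierDedekind2zero h₀ h₁ h₂ h₀₁ h₀₂ h₁₂
  have h12 := twelve_mul_eval_zero_jetCubeInverse a₀ a₁ a₂
  have ha₀ : (a₀ : ℂ) ≠ 0 := by exact_mod_cast h₀.ne'
  have ha₁ : (a₁ : ℂ) ≠ 0 := by exact_mod_cast h₁.ne'
  have ha₂ : (a₂ : ℂ) ≠ 0 := by exact_mod_cast h₂.ne'
  push_cast at h h12
  field_simp
  refine mul_left_cancel₀ (pow_ne_zero 2 (mul_ne_zero (mul_ne_zero ha₀ ha₁) ha₂)) ?_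
  linear_combination 12 * h - h12
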